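/- The functor Coalg → hCoalg, sending an ordinary coalgebra C in 𝒱 to the homotopy coalgebra with C(J)=C^{⊗J}, C(φ^op)=(⊗_{j∈J}Δ_{φ⁻¹j})·λ^φ, χ^I=λ^ψ, and a coalgebra morphism t to the family (t^{⊗I})_{I∈ℕ}, is full and faithful. -/

import Mathlib

/-!
Statement 1: The functor `Coalg → hCoalg`, sending an ordinary coalgebra `C` to the induced
homotopy coalgebra (`C(J) = C^{⊗J}`, `C(φ^op) = (⊗_j Δ_{φ⁻¹j})·λ^φ`, `χ^I = λ^ψ`) and a
coalgebra morphism `t` to the family `(t^{⊗I})_{I∈ℕ}`, is full and faithful.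
-/


open CategoryTheory Category Limits

universe v u

namespace Paper

/-- The number of elements of the fiber `φ⁻¹(j)` of a monotone map of finite ordinals. -/
def fiberCard {I J : ℕ} (φ : Fin I →o Fin J) (j : Fin J) : ℕ :=
  (Finset.univ.filter fun i => φ i = j).card

/-- The monotone enumeration of the fiber `φ⁻¹(j)`. -/
noncomputable def fiberEmb {I J : ℕ} (φ : Fin I →o Fin J) (j : Fin J)
    (p : Fin (fiberCard φ j)) : Fin I :=
  (((Finset.univ.filter fun i => φ i = j).orderIsoOfFin rfl) p).1

/-- `ψ` is the monotone map `⊔ᵢ nᵢ → I` sending the `i`-th block (of size `nᵢ`) to `i`;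
a monotone map is uniquely determined by its fiber cardinalities. -/
def IsBlockMap {I : ℕ} (n : Fin I → ℕ) (ψ : Fin (∑ i, n i) →o Fin I) : Prop :=
  ∀ i, fiberCard ψ i = n i

/-- The push-forward `φ_* k` of a multi-index: `(φ_* k)_j = ∑_{i ∈ φ⁻¹ j} k_i`. -/
noncomputable def pushf {I J : ℕ} (φ : Fin I →o Fin J) (k : Fin I → ℕ) (j : Fin J) : ℕ :=
  ∑ p, k (fiberEmb φ j p)

variable (V : Type u) [Category.{v} V]

/-- The data of a (strict) colax Monoidal structure on `V`: unbiased tensor products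
`⊗^{i∈I} Xᵢ` of finite families, and structure morphisms
`λ^φ : ⊗^{j∈J} ⊗^{i∈φ⁻¹j} Xᵢ ⟶ ⊗^{i∈I} Xᵢ` for monotone `φ : I → J`. -/
structure ColaxSetting where
  tens : ∀ {n : ℕ}, (Fin n → V) → V
  tensHom : ∀ {n : ℕ} {X Y : Fin n → V}, (∀ i, X i ⟶ Y i) → (tens X ⟶ tens Y)
  tensHom_id : ∀ {n : ℕ} (X : Fin n → V), tensHom (fun i => 𝟙 (X i)) = 𝟙 (tens X)
  tensHom_comp : ∀ {n : ℕ} {X Y Z : Fin n → V} (f : ∀ i, X i ⟶ Y i) (g : ∀ i, Y i ⟶ Z i),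
      tensHom (fun i => f i ≫ g i) = tensHom f ≫ tensHom g
  tens_single : ∀ (X : Fin 1 → V), tens X = X 0
  lam : ∀ {I J : ℕ} (φ : Fin I →o Fin J) (X : Fin I → V),
      tens (fun j => tens (fun p => X (fiberEmb φ j p))) ⟶ tens X
  lam_natural : ∀ {I J : ℕ} (φ : Fin I →o Fin J) {X Y : Fin I → V} (f : ∀ i, X i ⟶ Y i),
      tensHom (fun j => tensHom (fun p => f (fiberEmb φ j p))) ≫ lam φ Y
        = lam φ X ≫ tensHom f

variable {V}

/-- Tensor powers `X^{⊗n}`. -/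
def ColaxSetting.pow (S : ColaxSetting V) (X : V) (n : ℕ) : V := S.tens (fun _ : Fin n => X)

theorem ColaxSetting.pow_eq (S : ColaxSetting V) (X : V) {c d : ℕ} (h : c = d) :
    S.pow X c = S.pow X d := by subst h; rfl

/-- When all structure morphisms `λ^φ` are invertible, `(V, ⊗, λ)` is Monoidal
(rather than merely colax Monoidal). -/
structure ColaxSetting.Monoidal (S : ColaxSetting V) where
  lamInv : ∀ {I J : ℕ} (φ : Fin I →o Fin J) (X : Fin I → V),
      S.tens X ⟶ S.tens (fun j => S.tens (fun p => X (fiberEmb φ j p)))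
  lam_lamInv : ∀ {I J : ℕ} (φ : Fin I →o Fin J) (X : Fin I → V),
      S.lam φ X ≫ lamInv φ X = 𝟙 _
  lamInv_lam : ∀ {I J : ℕ} (φ : Fin I →o Fin J) (X : Fin I → V),
      lamInv φ X ≫ S.lam φ X = 𝟙 _

/-- A homotopy coalgebra (= homotopy comonoid) in `V`: a lax Monoidal functor
`(O_sk^op, ⊔, id) → (V, ⊗, λ)`, unbiasedly unpacked. -/
structure HCoalgebra (S : ColaxSetting V) where
  obj : ℕ → V
  /-- the action of `C` on `φ^op` for a monotone map `φ : I → J` -/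
  map : ∀ {I J : ℕ}, (Fin I →o Fin J) → (obj J ⟶ obj I)
  map_id : ∀ I : ℕ, map (OrderHom.id (α := Fin I)) = 𝟙 (obj I)
  map_comp : ∀ {I J K : ℕ} (φ : Fin I →o Fin J) (ψ : Fin J →o Fin K),
      map (ψ.comp φ) = map ψ ≫ map φ
  /-- the lax Monoidal structure `χ^I_{N₁,…,N_I}` -/
  chi : ∀ {I : ℕ} (N : Fin I → ℕ), S.tens (fun i => obj (N i)) ⟶ obj (∑ i, N i)
  chi_one : ∀ (N : Fin 1 → ℕ) (h : S.tens (fun i => obj (N i)) = obj (∑ i, N i)),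
      chi N = eqToHom h
  /-- naturality of `χ^I` in its arguments; `Φ = ⊔ᵢ φᵢ` is the block sum of the `φᵢ`,
  characterized by preserving blocks and acting as `φᵢ` on the `i`-th block. -/
  chi_natural : ∀ {I : ℕ} {M N : Fin I → ℕ} (φ : ∀ i, Fin (M i) →o Fin (N i))
      (Φ : Fin (∑ i, M i) →o Fin (∑ i, N i))
      (ψM : Fin (∑ i, M i) →o Fin I) (hM : IsBlockMap M ψM)
      (ψN : Fin (∑ i, N i) →o Fin I) (hN : IsBlockMap N ψN)
      (_ : ∀ q, ψN (Φ q) = ψM q)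
      (_ : ∀ (i : Fin I) (p : Fin (fiberCard ψM i)),
        Φ (fiberEmb ψM i p) = fiberEmb ψN i (Fin.cast (hN i).symm (φ i (Fin.cast (hM i) p)))),
      S.tensHom (fun i => map (φ i)) ≫ chi M = chi N ≫ map Φ
  /-- compatibility of `χ` with the colax structure of `V` (diagram (2φ-1φ)). -/
  chi_assoc : ∀ {I J : ℕ} (φ : Fin I →o Fin J) (N : Fin I → ℕ)
      (h : obj (∑ j, ∑ p, N (fiberEmb φ j p)) = obj (∑ i, N i)),
      S.tensHom (fun j => chi (fun p => N (fiberEmb φ j p)))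
          ≫ chi (fun j => ∑ p, N (fiberEmb φ j p)) ≫ eqToHom h
        = S.lam φ (fun i => obj (N i)) ≫ chi N

/-- Morphisms of homotopy coalgebras: Monoidal transformations of lax Monoidal functors. -/
@[ext]
structure HCoalgHom {S : ColaxSetting V} (C G : HCoalgebra S) where
  app : ∀ n : ℕ, C.obj n ⟶ G.obj n
  naturality : ∀ {I J : ℕ} (φ : Fin I →o Fin J),
      app J ≫ G.map φ = C.map φ ≫ app I
  monoidality : ∀ {I : ℕ} (N : Fin I → ℕ),
      S.tensHom (fun i => app (N i)) ≫ G.chi N = C.chi N ≫ app (∑ i, N i)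

/-- The category `hCoalg` of homotopy coalgebras. -/
instance hCoalgCategory (S : ColaxSetting V) : Category (HCoalgebra S) where
  Hom := HCoalgHom
  id C := { app := fun n => 𝟙 _
            naturality := by intros; simp
            monoidality := by intros; rw [S.tensHom_id]; simp }
  comp {C G H} f g :=
    { app := fun n => f.app n ≫ g.app n
      naturality := by
        intro I J φ
        rw [assoc, g.naturality, ← assoc, f.naturality, assoc]
      monoidality := by
        intro I N
        rw [S.tensHom_comp, assoc, g.monoidality, ← assoc, f.monoidality, assoc] }
  id_comp f := by apply HCoalgHom.ext; funext n; simp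
  comp_id f := by apply HCoalgHom.ext; funext n; simp
  assoc f g h := by apply HCoalgHom.ext; funext n; simp

@[simp] theorem hc_id_app {S : ColaxSetting V} (C : HCoalgebra S) (n : ℕ) :
    HCoalgHom.app (𝟙 C) n = 𝟙 (C.obj n) := rfl

@[simp] theorem hc_comp_app {S : ColaxSetting V} {C G H : HCoalgebra S}
    (f : C ⟶ G) (g : G ⟶ H) (n : ℕ) :
    HCoalgHom.app (f ≫ g) n = HCoalgHom.app f n ≫ HCoalgHom.app g n := rfl

/-- An ordinary coalgebra in `V`: an object with compatible comultiplications `Δ_I`. -/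
structure OrdCoalgebra (S : ColaxSetting V) where
  pt : V
  delta : ∀ I : ℕ, pt ⟶ S.tens (fun _ : Fin I => pt)
  delta_one : ∀ h : pt = S.tens (fun _ : Fin 1 => pt), delta 1 = eqToHom h
  delta_comp : ∀ {I J : ℕ} (φ : Fin I →o Fin J),
      delta I = delta J ≫ S.tensHom (fun j => delta (fiberCard φ j)) ≫ S.lam φ (fun _ => pt)

/-- Morphisms of ordinary coalgebras. -/
structure OrdCoalgHom {S : ColaxSetting V} (C D : OrdCoalgebra S) where
  f : C.pt ⟶ D.pt
  compat : ∀ I : ℕ, f ≫ D.delta I = C.delta I ≫ S.tensHom (fun _ => f)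

/-- `CH` is the homotopy coalgebra induced by the ordinary coalgebra `C`
(Proposition 2.27: `C(J) = C^{⊗J}`, `C(φ^op) = (⊗_j Δ_{φ⁻¹j})·λ^φ`, `χ^I = λ^ψ`). -/
structure Induced {S : ColaxSetting V} (C : OrdCoalgebra S) (CH : HCoalgebra S) where
  hobj : ∀ I : ℕ, CH.obj I = S.tens (fun _ : Fin I => C.pt)
  obj1 : CH.obj 1 = C.pt
  map_eq : ∀ {I J : ℕ} (φ : Fin I →o Fin J),
      CH.map φ = eqToHom (hobj J) ≫ S.tensHom (fun j => C.delta (fiberCard φ j))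
        ≫ S.lam φ (fun _ => C.pt) ≫ eqToHom (hobj I).symm
  chi_eq : ∀ {I : ℕ} (N : Fin I → ℕ) (ψ : Fin (∑ i, N i) →o Fin I) (_ : IsBlockMap N ψ)
      (h1 : S.tens (fun i => CH.obj (N i))
          = S.tens (fun i => S.tens (fun _ : Fin (fiberCard ψ i) => C.pt))),
      CH.chi N = eqToHom h1 ≫ S.lam ψ (fun _ => C.pt) ≫ eqToHom (hobj (∑ i, N i)).symm

/-!
Faithfulness is read off in degree `1`, where `t^{⊗1} = t` because `Δ₁ = id`. For fullness,
`χ^I_{1,…,1}` of an induced homotopy coalgebra is the action of the bijective block map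
`⊔ᵢ 1 → I`, hence invertible, so monoidality of `u` at `(1,…,1)` forces `u_I = u_1^{⊗I}`;
naturality of `u` along `I → 1` then says that `u_1` commutes with every `Δ_I`. Conversely,
`t^{⊗I}` is natural by naturality of `λ` and compatibility of `t` with the `Δ`'s, and it is
monoidal because `χ^I_N = λ^ψ` for a block map `ψ`, which exists for every multi-index `N`.
-/

section BlockMap

open Finset

lemma finSigmaFinEquiv_val_eq_sum_Iio {I : ℕ} {N : Fin I → ℕ} (σ : (i : Fin I) × Fin (N i)) :
    (finSigmaFinEquiv σ : ℕ) = ∑ k ∈ Iio σ.1, N k + σ.2 := by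
  have h : (univ : Finset (Fin σ.1)).map (Fin.castLEEmb σ.1.2.le) = Iio σ.1 := by
    ext k
    simp only [mem_map, mem_univ, true_and, Fin.castLEEmb_apply, mem_Iio]
    exact ⟨fun ⟨a, ha⟩ => ha ▸ a.2, fun hk => ⟨⟨k, hk⟩, rfl⟩⟩
  rw [finSigmaFinEquiv_apply, ← h, sum_map]
  rfl

lemma monotone_finSigmaFinEquiv_symm_fst {I : ℕ} (N : Fin I → ℕ) :
    Monotone fun q : Fin (∑ i, N i) => (finSigmaFinEquiv.symm q).1 := by
  intro q q' hq
  by_contra! hlt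
  obtain ⟨σ, rfl⟩ := finSigmaFinEquiv.surjective q
  obtain ⟨σ', rfl⟩ := finSigmaFinEquiv.surjective q'
  simp only [Equiv.symm_apply_apply] at hlt
  have hblocks : N σ'.1 + ∑ k ∈ Iio σ'.1, N k ≤ ∑ k ∈ Iio σ.1, N k := by
    rw [add_sum_Iio_eq_sum_Iic]
    exact sum_le_sum_of_subset fun k hk => mem_Iio.2 ((mem_Iic.1 hk).trans_lt hlt)
  rw [Fin.le_iff_val_le_val, finSigmaFinEquiv_val_eq_sum_Iio,
    finSigmaFinEquiv_val_eq_sum_Iio] at hq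
  have hσ' : (σ'.2 : ℕ) < N σ'.1 := σ'.2.isLt
  omega

noncomputable def blockMap {I : ℕ} (N : Fin I → ℕ) : Fin (∑ i, N i) →o Fin I :=
  ⟨fun q => (finSigmaFinEquiv.symm q).1, monotone_finSigmaFinEquiv_symm_fst N⟩

lemma isBlockMap_blockMap {I : ℕ} (N : Fin I → ℕ) : IsBlockMap N (blockMap N) := by
  intro i
  rw [fiberCard, ← Fintype.card_subtype, ← Fintype.card_fin (N i)]
  exact Fintype.card_congr
    ((finSigmaFinEquiv.symm.subtypeEquiv fun _ => Iff.rfl).trans (Equiv.sigmaSubtype i))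

lemma isBlockMap_const_one {I : ℕ} (e : Fin (∑ _i : Fin I, 1) ≃o Fin I) :
    IsBlockMap (fun _ => 1) (e : Fin (∑ _i : Fin I, 1) →o Fin I) := by
  intro i
  refine card_eq_one.2 ⟨e.symm i, ?_⟩
  ext q
  simp only [mem_filter, mem_univ, true_and, mem_singleton, e.eq_symm_apply]
  rfl

end BlockMap

namespace ColaxSetting

variable (S : ColaxSetting V)

lemma tensHom_eqToHom {n : ℕ} {X Y : Fin n → V} (h : ∀ i, X i = Y i) :
    S.tensHom (fun i => eqToHom (h i)) = eqToHom (congrArg S.tens (funext h)) := by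
  obtain rfl : X = Y := funext h
  simpa using S.tensHom_id X

lemma tensHom_eqToHom_conj {n : ℕ} {X X' Y Y' : Fin n → V} (hX : ∀ i, X' i = X i)
    (hY : ∀ i, Y i = Y' i) (f : ∀ i, X i ⟶ Y i) :
    S.tensHom (fun i => eqToHom (hX i) ≫ f i ≫ eqToHom (hY i))
      = eqToHom (congrArg S.tens (funext hX)) ≫ S.tensHom f
          ≫ eqToHom (congrArg S.tens (funext hY)) := by
  rw [S.tensHom_comp (fun i => eqToHom (hX i)), S.tensHom_comp f, tensHom_eqToHom,
    tensHom_eqToHom]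

lemma tensHom_tensHom_const_congr {A B : V} (f : A ⟶ B) {I : ℕ} {n m : Fin I → ℕ} (h : n = m)
    (hA : S.tens (fun i => S.tens (fun _ : Fin (n i) => A))
      = S.tens (fun i => S.tens (fun _ : Fin (m i) => A)))
    (hB : S.tens (fun i => S.tens (fun _ : Fin (n i) => B))
      = S.tens (fun i => S.tens (fun _ : Fin (m i) => B))) :
    S.tensHom (fun i => S.tensHom (fun _ : Fin (n i) => f)) ≫ eqToHom hB
      = eqToHom hA ≫ S.tensHom (fun i => S.tensHom (fun _ : Fin (m i) => f)) := by
  subst h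
  simp

end ColaxSetting

lemma HCoalgebra.isIso_map {S : ColaxSetting V} (C : HCoalgebra S) {I J : ℕ}
    (e : Fin I ≃o Fin J) : IsIso (C.map (e : Fin I →o Fin J)) := by
  refine ⟨C.map (e.symm : Fin J →o Fin I), ?_, ?_⟩ <;>
  · rw [← C.map_comp]
    convert C.map_id _
    ext
    simp

lemma OrdCoalgebra.delta_of_eq_one {S : ColaxSetting V} (C : OrdCoalgebra S) {n : ℕ} (h : n = 1)
    (h' : C.pt = S.tens (fun _ : Fin n => C.pt)) : C.delta n = eqToHom h' := by
  subst h
  exact C.delta_one h'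

namespace OrdCoalgHom

variable {S : ColaxSetting V} {C D : OrdCoalgebra S} (t : OrdCoalgHom C D)

lemma tensHom_const_one :
    S.tensHom (fun _ : Fin 1 => t.f)
      = eqToHom (S.tens_single _) ≫ t.f ≫ eqToHom (S.tens_single _).symm := by
  have h := t.compat 1
  rw [C.delta_one (S.tens_single fun _ => C.pt).symm,
    D.delta_one (S.tens_single fun _ => D.pt).symm] at h
  rw [← eqToHom_comp_iff] at h
  exact h.symm

lemma tensHom_comp_delta_comp_lam {I J : ℕ} (φ : Fin I →o Fin J) :
    S.tensHom (fun _ : Fin J => t.f) ≫ S.tensHom (fun j => D.delta (fiberCard φ j))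
        ≫ S.lam φ (fun _ => D.pt)
      = S.tensHom (fun j => C.delta (fiberCard φ j)) ≫ S.lam φ (fun _ => C.pt)
        ≫ S.tensHom (fun _ : Fin I => t.f) := by
  rw [← S.lam_natural φ (fun _ => t.f), ← assoc, ← S.tensHom_comp, ← assoc, ← S.tensHom_comp]
  simp only [t.compat]

end OrdCoalgHom

namespace Induced

variable {S : ColaxSetting V} {C D : OrdCoalgebra S} {CH DH : HCoalgebra S}

lemma map_eq_delta (iC : Induced C CH) {I : ℕ} (φ : Fin I →o Fin 1) :
    CH.map φ = eqToHom iC.obj1 ≫ C.delta I ≫ eqToHom (iC.hobj I).symm := by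
  rw [iC.map_eq φ, C.delta_comp φ, C.delta_one (S.tens_single fun _ => C.pt).symm]
  simp

lemma chi_const_one_eq_map (iC : Induced C CH) {I : ℕ} (e : Fin (∑ _i : Fin I, 1) ≃o Fin I)
    (h : S.tens (fun _ : Fin I => CH.obj 1) = CH.obj I) :
    CH.chi (fun _ : Fin I => 1) = eqToHom h ≫ CH.map (e : Fin (∑ _i : Fin I, 1) →o Fin I) := by
  have hfib := isBlockMap_const_one e
  have hpt : ∀ i, C.pt = S.tens (fun _ : Fin (fiberCard (e : Fin (∑ _i : Fin I, 1) →o Fin I) i) =>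
      C.pt) :=
    fun i => (S.tens_single fun _ => C.pt).symm.trans (S.pow_eq C.pt (hfib i).symm)
  rw [iC.chi_eq _ _ hfib (congrArg S.tens (funext fun i => iC.obj1.trans (hpt i))), iC.map_eq,
    funext fun i => C.delta_of_eq_one (hfib i) (hpt i), S.tensHom_eqToHom]
  simp

def powHom (iC : Induced C CH) (iD : Induced D DH) (f : C.pt ⟶ D.pt) (I : ℕ) :
    CH.obj I ⟶ DH.obj I :=
  eqToHom (iC.hobj I) ≫ S.tensHom (fun _ : Fin I => f) ≫ eqToHom (iD.hobj I).symm

lemma powHom_naturality (iC : Induced C CH) (iD : Induced D DH) (t : OrdCoalgHom C D) {I J : ℕ}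
    (φ : Fin I →o Fin J) :
    iC.powHom iD t.f J ≫ DH.map φ = CH.map φ ≫ iC.powHom iD t.f I := by
  simp only [powHom, iC.map_eq, iD.map_eq, assoc, eqToHom_trans_assoc, eqToHom_refl, id_comp,
    reassoc_of% t.tensHom_comp_delta_comp_lam φ]

lemma powHom_monoidality (iC : Induced C CH) (iD : Induced D DH) (t : OrdCoalgHom C D) {I : ℕ}
    (N : Fin I → ℕ) :
    S.tensHom (fun i => iC.powHom iD t.f (N i)) ≫ DH.chi N
      = CH.chi N ≫ iC.powHom iD t.f (∑ i, N i) := by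
  have hψ := isBlockMap_blockMap N
  have hC : ∀ i, S.tens (fun _ : Fin (N i) => C.pt)
      = S.tens (fun _ : Fin (fiberCard (blockMap N) i) => C.pt) :=
    fun i => S.pow_eq C.pt (hψ i).symm
  have hD : ∀ i, S.tens (fun _ : Fin (N i) => D.pt)
      = S.tens (fun _ : Fin (fiberCard (blockMap N) i) => D.pt) :=
    fun i => S.pow_eq D.pt (hψ i).symm
  simp only [powHom]
  rw [iC.chi_eq N _ hψ (congrArg S.tens (funext fun i => (iC.hobj (N i)).trans (hC i))),
    iD.chi_eq N _ hψ (congrArg S.tens (funext fun i => (iD.hobj (N i)).trans (hD i))),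
    S.tensHom_eqToHom_conj (fun i => iC.hobj (N i)) (fun i => (iD.hobj (N i)).symm)]
  simp only [assoc, eqToHom_trans_assoc, eqToHom_refl, id_comp]
  rw [← assoc _ (eqToHom _), S.tensHom_tensHom_const_congr t.f
      (show N = fiberCard (blockMap N) from (funext hψ).symm) (congrArg S.tens (funext hC)),
    assoc, eqToHom_trans_assoc, reassoc_of% (S.lam_natural (blockMap N) fun _ => t.f)]

def powHCoalgHom (iC : Induced C CH) (iD : Induced D DH) (t : OrdCoalgHom C D) :
    HCoalgHom CH DH where
  app := iC.powHom iD t.f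
  naturality := powHom_naturality iC iD t
  monoidality := powHom_monoidality iC iD t

lemma powHom_one (iC : Induced C CH) (iD : Induced D DH) (t : OrdCoalgHom C D) :
    iC.powHom iD t.f 1 = eqToHom iC.obj1 ≫ t.f ≫ eqToHom iD.obj1.symm := by
  simp [powHom, t.tensHom_const_one]

lemma f_eq_of_powHom_one_eq (iC : Induced C CH) (iD : Induced D DH) {t t' : OrdCoalgHom C D}
    (h : iC.powHom iD t.f 1 = iC.powHom iD t'.f 1) : t.f = t'.f := by
  rwa [powHom_one, powHom_one, cancel_epi, cancel_mono] at h

lemma app_eq_powHom (iC : Induced C CH) (iD : Induced D DH) (u : HCoalgHom CH DH) (I : ℕ) :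
    u.app I = iC.powHom iD (eqToHom iC.obj1.symm ≫ u.app 1 ≫ eqToHom iD.obj1) I := by
  let e : Fin (∑ _i : Fin I, 1) ≃o Fin I := Fin.castOrderIso (by simp)
  have hC : S.tens (fun _ : Fin I => CH.obj 1) = CH.obj I :=
    (congrArg S.tens (funext fun _ => iC.obj1)).trans (iC.hobj I).symm
  have hD : S.tens (fun _ : Fin I => DH.obj 1) = DH.obj I :=
    (congrArg S.tens (funext fun _ => iD.obj1)).trans (iD.hobj I).symm
  have hmon := u.monoidality (fun _ : Fin I => 1)
  rw [iC.chi_const_one_eq_map e hC, iD.chi_const_one_eq_map e hD, assoc, ← u.naturality,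
    ← assoc, ← assoc] at hmon
  have := DH.isIso_map e
  rw [(eqToHom_comp_iff hC _ _).1 ((cancel_mono _).1 hmon).symm, powHom,
    S.tensHom_eqToHom_conj (fun _ => iC.obj1.symm) (fun _ => iD.obj1)]
  simp

def ordCoalgHom (iC : Induced C CH) (iD : Induced D DH) (u : HCoalgHom CH DH) :
    OrdCoalgHom C D where
  f := eqToHom iC.obj1.symm ≫ u.app 1 ≫ eqToHom iD.obj1
  compat I := by
    have hnat := u.naturality (⊥ : Fin I →o Fin 1)
    rw [iC.map_eq_delta, iD.map_eq_delta, iC.app_eq_powHom iD u I, powHom] at hnat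
    rw [← cancel_epi (eqToHom iC.obj1), ← cancel_mono (eqToHom (iD.hobj I).symm)]
    simpa using hnat

end Induced

theorem statement_1 {V : Type u} [Category.{v} V] {S : ColaxSetting V}
    (C D : OrdCoalgebra S) (CH DH : HCoalgebra S)
    (iC : Induced C CH) (iD : Induced D DH) :
    -- the assignment `t ↦ (t^{⊗I})_I` is well defined: it lands in `hCoalg(CH, DH)` …
    (∀ t : OrdCoalgHom C D, ∃ u : HCoalgHom CH DH, ∀ I : ℕ,
      u.app I = eqToHom (iC.hobj I) ≫ S.tensHom (fun _ : Fin I => t.f)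
        ≫ eqToHom (iD.hobj I).symm) ∧
    -- … it is injective on morphisms (the functor is faithful) …
    (∀ t t' : OrdCoalgHom C D,
      (∀ I : ℕ,
        (eqToHom (iC.hobj I) ≫ S.tensHom (fun _ : Fin I => t.f) ≫ eqToHom (iD.hobj I).symm :
            CH.obj I ⟶ DH.obj I)
          = eqToHom (iC.hobj I) ≫ S.tensHom (fun _ : Fin I => t'.f) ≫ eqToHom (iD.hobj I).symm)
      → t.f = t'.f) ∧
    -- … and surjective on morphisms (the functor is full).
    (∀ u : HCoalgHom CH DH, ∃ t : OrdCoalgHom C D, ∀ I : ℕ,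
      u.app I = eqToHom (iC.hobj I) ≫ S.tensHom (fun _ : Fin I => t.f)
        ≫ eqToHom (iD.hobj I).symm) :=
  ⟨fun t => ⟨iC.powHCoalgHom iD t, fun _ => rfl⟩,
    fun _ _ h => iC.f_eq_of_powHom_one_eq iD (h 1),
    fun u => ⟨iC.ordCoalgHom iD u, iC.app_eq_powHom iD u⟩⟩
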